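/- arXiv:2004.12610 — 5 statements merged into one kernel-verified Lean document; each statement's English description precedes it below -/
import Mathlib

section
/- If T is a contraction on a Hilbert space H, then there exists a Hilbert space K containing H and an isometry V on K such that T^k = P_H V^k |_H for all nonnegative integers k, where P_H is the orthogonal projection onto H. -/
/-! Schäffer's construction. With `D = √(1 - T⋆T)` one has `‖T h‖² + ‖D h‖² = ‖h‖²`, so
`V (h₀, h₁, h₂, …) = (T h₀, D h₀, h₁, h₂, …)` is an isometry of `ℓ²(ℕ, H)`. The zeroth
coordinate of `V f` is `T` applied to the zeroth coordinate of `f`, so compressing `V ^ k` to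
the zeroth copy of `H` gives `T ^ k`. -/

open ContinuousLinearMap

universe u

/-- A Sz.-Nagy isometric dilation of an operator `T` on a Hilbert space `H`:
a Hilbert space `K` containing `H` (via an isometric embedding `ι`) and an isometry `V`
on `K` such that `T ^ k = P_H V ^ k |_H` for all `k : ℕ`. -/
structure SzNagyDilation {H : Type u} [NormedAddCommGroup H] [InnerProductSpace ℂ H]
    [CompleteSpace H] (T : H →L[ℂ] H) : Type (u + 1) where
  K : Type u
  [nacg : NormedAddCommGroup K]
  [ips : InnerProductSpace ℂ K]
  [cs : CompleteSpace K]
  ι : H →L[ℂ] K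
  V : K →L[ℂ] K
  ι_isometry : ∀ h : H, ‖ι h‖ = ‖h‖
  V_isometry : adjoint V ∘L V = 1
  dilation : ∀ k : ℕ, T ^ k = adjoint ι ∘L (V ^ k) ∘L ι

namespace CStarAlgebra

variable {A : Type*} [CStarAlgebra A] [PartialOrder A] [StarOrderedRing A]

noncomputable def defect (a : A) : A := CFC.sqrt (1 - star a * a)

theorem star_mul_self_le_one {a : A} (ha : ‖a‖ ≤ 1) : star a * a ≤ 1 := by
  rw [← norm_le_one_iff_of_nonneg (star a * a), CStarRing.norm_star_mul_self]
  exact mul_le_one₀ ha (norm_nonneg a) ha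

theorem star_mul_self_add_star_defect_mul_defect {a : A} (ha : ‖a‖ ≤ 1) :
    star a * a + star (defect a) * defect a = 1 := by
  rw [defect, (IsSelfAdjoint.of_nonneg (CFC.sqrt_nonneg (1 - star a * a))).star_eq,
    CFC.sqrt_mul_sqrt_self _ (sub_nonneg.mpr (star_mul_self_le_one ha)), add_sub_cancel]

end CStarAlgebra

namespace ContinuousLinearMap

variable {𝕜 H K L : Type*} [RCLike 𝕜] [NormedAddCommGroup H] [InnerProductSpace 𝕜 H]
  [CompleteSpace H] [NormedAddCommGroup K] [InnerProductSpace 𝕜 K] [CompleteSpace K]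
  [NormedAddCommGroup L] [InnerProductSpace 𝕜 L] [CompleteSpace L]

theorem norm_sq_add_norm_sq_eq_of_adjoint_comp_add_eq_one {A : H →L[𝕜] K} {B : H →L[𝕜] L}
    (hAB : adjoint A ∘L A + adjoint B ∘L B = 1) (x : H) :
    ‖A x‖ ^ 2 + ‖B x‖ ^ 2 = ‖x‖ ^ 2 := by
  rw [apply_norm_sq_eq_inner_adjoint_left, apply_norm_sq_eq_inner_adjoint_left, ← map_add,
    ← inner_add_left, ← add_apply, hAB, one_apply_eq_self, inner_self_eq_norm_sq]

end ContinuousLinearMap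

namespace lp

section Single

variable {𝕜 ι : Type*} [RCLike 𝕜] [DecidableEq ι] {G : ι → Type*}
  [∀ i, NormedAddCommGroup (G i)] [∀ i, InnerProductSpace 𝕜 (G i)] [∀ i, CompleteSpace (G i)]

theorem adjoint_singleContinuousLinearMap_apply (i : ι) (f : lp G 2) :
    adjoint (singleContinuousLinearMap 𝕜 G 2 i) f = f i :=
  ext_inner_right 𝕜 fun a => by
    rw [adjoint_inner_left, singleContinuousLinearMap_apply, inner_single_right]

end Single

theorem hasSum_norm_sq {α : Type*} {E : α → Type*} [∀ i, NormedAddCommGroup (E i)]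
    (f : lp E 2) : HasSum (fun i => ‖f i‖ ^ 2) (‖f‖ ^ 2) := by
  simpa using hasSum_norm (p := 2) (by norm_num) f

section SchaefferShift

variable {𝕜 E : Type*} [NormedField 𝕜] [NormedAddCommGroup E] [NormedSpace 𝕜 E]
  (A B : E →L[𝕜] E)

def schaefferShiftFun (f : ℕ → E) : ℕ → E
  | 0 => A (f 0)
  | 1 => B (f 0)
  | n + 2 => f (n + 1)

theorem memℓp_schaefferShiftFun {f : ℕ → E} (hf : Memℓp f 2) :
    Memℓp (schaefferShiftFun A B f) 2 := by
  refine memℓp_gen ((summable_nat_add_iff 2).mp ?_)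
  exact (summable_nat_add_iff 1).mpr ((memℓp_gen_iff (by norm_num)).mp hf)

def schaefferShiftₗ : lp (fun _ : ℕ => E) 2 →ₗ[𝕜] lp (fun _ : ℕ => E) 2 where
  toFun f := ⟨schaefferShiftFun A B f, memℓp_schaefferShiftFun A B f.2⟩
  map_add' f g := by
    ext (_ | _ | n) <;> simp only [schaefferShiftFun, lp.coeFn_add, Pi.add_apply, map_add]
  map_smul' c f := by
    ext (_ | _ | n) <;>
      simp only [schaefferShiftFun, lp.coeFn_smul, Pi.smul_apply, map_smul, RingHom.id_apply]

variable {A B}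

theorem norm_schaefferShiftₗ (hAB : ∀ x, ‖A x‖ ^ 2 + ‖B x‖ ^ 2 = ‖x‖ ^ 2)
    (f : lp (fun _ : ℕ => E) 2) : ‖schaefferShiftₗ A B f‖ = ‖f‖ := by
  have htail : HasSum (fun n => ‖f (n + 1)‖ ^ 2) (‖f‖ ^ 2 - ‖f 0‖ ^ 2) := by
    simpa only [Finset.sum_range_one] using (hasSum_nat_add_iff' 1).mpr (hasSum_norm_sq f)
  have hhead : ∑ i ∈ Finset.range 2, ‖schaefferShiftₗ A B f i‖ ^ 2 = ‖f 0‖ ^ 2 := by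
    simp [Finset.sum_range_succ, schaefferShiftₗ, schaefferShiftFun, hAB]
  have hshift : HasSum (fun n => ‖schaefferShiftₗ A B f n‖ ^ 2) (‖f‖ ^ 2) := by
    rw [← hasSum_nat_add_iff' 2, hhead]
    exact htail
  exact (sq_eq_sq₀ (norm_nonneg _) (norm_nonneg _)).mp ((hasSum_norm_sq _).unique hshift)

def schaefferShift (hAB : ∀ x, ‖A x‖ ^ 2 + ‖B x‖ ^ 2 = ‖x‖ ^ 2) :
    lp (fun _ : ℕ => E) 2 →ₗᵢ[𝕜] lp (fun _ : ℕ => E) 2 where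
  __ := schaefferShiftₗ A B
  norm_map' := norm_schaefferShiftₗ hAB

theorem schaefferShift_pow_apply_zero (hAB : ∀ x, ‖A x‖ ^ 2 + ‖B x‖ ^ 2 = ‖x‖ ^ 2) (k : ℕ)
    (f : lp (fun _ : ℕ => E) 2) :
    ((schaefferShift hAB).toContinuousLinearMap ^ k) f 0 = (A ^ k) (f 0) := by
  have hsemiconj : Function.Semiconj (fun g : lp (fun _ : ℕ => E) 2 => g 0)
      (schaefferShift hAB).toContinuousLinearMap A := fun _ => rfl
  simpa only [FunLike.coe_pow_eq_iterate] using hsemiconj.iterate_right k f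

end SchaefferShift

end lp

/-- Sz.-Nagy's dilation theorem: every contraction on a Hilbert space has an
isometric dilation. -/
theorem sz_nagy_isometric_dilation {H : Type u} [NormedAddCommGroup H]
    [InnerProductSpace ℂ H] [CompleteSpace H] (T : H →L[ℂ] H) (hT : ‖T‖ ≤ 1) :
    Nonempty (SzNagyDilation T) := by
  have hTD : ∀ x, ‖T x‖ ^ 2 + ‖CStarAlgebra.defect T x‖ ^ 2 = ‖x‖ ^ 2 :=
    norm_sq_add_norm_sq_eq_of_adjoint_comp_add_eq_one <| by
      simpa [star_eq_adjoint, mul_def] using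
        CStarAlgebra.star_mul_self_add_star_defect_mul_defect hT
  let V := lp.schaefferShift hTD
  refine ⟨{ K := lp (fun _ : ℕ => H) 2
            ι := lp.singleContinuousLinearMap ℂ (fun _ : ℕ => H) 2 0
            V := V.toContinuousLinearMap
            ι_isometry := lp.norm_single (E := fun _ : ℕ => H) (by norm_num) 0
            V_isometry := (norm_map_iff_adjoint_comp_self _).mp V.norm_map
            dilation := fun k => ext fun h => ?_ }⟩
  rw [comp_apply, comp_apply, lp.adjoint_singleContinuousLinearMap_apply (G := fun _ : ℕ => H),
    lp.schaefferShift_pow_apply_zero, lp.singleContinuousLinearMap_apply, lp.single_apply_self]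
end

section
/- Let T = (T_1,…,T_n) be a commuting tuple of contractions on H. If T is pure (i.e. T_i^{*m} h → 0 as m → ∞ for each i and each h ∈ H) and T satisfies Szegő positivity (i.e. ∑_{F ⊆ {1,…,n}} (−1)^{|F|} T_F T_F* ≥ 0), then T satisfies Brehmer positivity (i.e. ∑_{F ⊆ G} (−1)^{|F|} T_F T_F* ≥ 0 for every subset G of {1,…,n}). -/
open ContinuousLinearMap Filter Topology

/-- For a tuple `S` of operators and a finite index set `F`, the product `S_F` of the
operators `S i`, `i ∈ F` (in increasing index order). -/
noncomputable def subProd {H : Type*} [NormedAddCommGroup H] [InnerProductSpace ℂ H]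
    {m : ℕ} (S : Fin m → (H →L[ℂ] H)) (F : Finset (Fin m)) : H →L[ℂ] H :=
  ((F.sort (· ≤ ·)).map S).prod

/-- The Brehmer defect operator `∑_{F ⊆ G} (−1)^{|F|} S_F S_F*`. -/
noncomputable def brehmerDefect {H : Type*} [NormedAddCommGroup H] [InnerProductSpace ℂ H]
    [CompleteSpace H] {m : ℕ} (S : Fin m → (H →L[ℂ] H)) (G : Finset (Fin m)) :
    H →L[ℂ] H :=
  ∑ F ∈ G.powerset, (-1 : ℂ) ^ F.card • (subProd S F * adjoint (subProd S F))

/-!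
Removing an index `i` from `G` relates the defects by `D_{G ∪ {i}} = D_G - T_i D_G T_i*`, so
positivity of `D_{G ∪ {i}}` says that `k ↦ ⟪D_G T_i*^k x, T_i*^k x⟫` is decreasing. Purity of
`T_i` makes this sequence tend to `0`, hence its first term `⟪D_G x, x⟫` is nonnegative.
Starting from Szegő positivity (`G` = everything) and removing indices one at a time gives
positivity of every `D_G`.
-/

namespace ContinuousLinearMap

variable {𝕜 E : Type*} [RCLike 𝕜] [NormedAddCommGroup E] [InnerProductSpace 𝕜 E] [CompleteSpace E]

theorem isPositive_of_isPositive_sub_conj_adjoint {A V : E →L[𝕜] E} (hA : IsSelfAdjoint A)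
    (hV : ∀ x, Tendsto (fun k : ℕ => (adjoint V ^ k) x) atTop (𝓝 0))
    (h : (A - V * A * adjoint V).IsPositive) : A.IsPositive := by
  refine isPositive_def'.2 ⟨hA, fun x => ?_⟩
  set f : ℕ → ℝ := fun k => A.reApplyInnerSelf ((adjoint V ^ k) x)
  have hstep : ∀ k, f k = (A - V * A * adjoint V).reApplyInnerSelf ((adjoint V ^ k) x)
      + f (k + 1) := by
    intro k
    simp only [f, reApplyInnerSelf, pow_succ', mul_apply_eq_comp, sub_apply, inner_sub_left,
      map_sub, ← adjoint_inner_right V]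
    ring
  have hanti : Antitone f := antitone_nat_of_succ_le fun k => by
    linarith [hstep k, h.2 ((adjoint V ^ k) x)]
  have hlim : Tendsto f atTop (𝓝 (A.reApplyInnerSelf 0)) :=
    (A.reApplyInnerSelf_continuous.tendsto 0).comp (hV x)
  simpa [f, reApplyInnerSelf] using hanti.le_of_tendsto hlim 0

end ContinuousLinearMap

section BrehmerDefect

variable {H : Type*} [NormedAddCommGroup H] [InnerProductSpace ℂ H] {m : ℕ}
  {S : Fin m → (H →L[ℂ] H)}

theorem subProd_insert (hcomm : ∀ i j, Commute (S i) (S j)) {F : Finset (Fin m)} {i : Fin m}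
    (hi : i ∉ F) : subProd S (insert i F) = S i * subProd S F := by
  have hperm : ((insert i F).sort (· ≤ ·)).Perm (i :: F.sort (· ≤ ·)) := by
    rw [← Multiset.coe_eq_coe, Finset.sort_eq, Finset.insert_val_of_notMem hi,
      ← Multiset.cons_coe, Finset.sort_eq]
  simpa [subProd] using (hperm.map S).prod_eq'
    (List.pairwise_map.2 (List.pairwise_of_forall fun a b => hcomm a b))

variable [CompleteSpace H]

theorem isSelfAdjoint_brehmerDefect (G : Finset (Fin m)) :
    IsSelfAdjoint (brehmerDefect S G) := by
  refine isSelfAdjoint_sum _ fun F _ => ?_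
  rw [← star_eq_adjoint]
  exact ((IsSelfAdjoint.one (R := ℂ)).neg.pow _).smul (.mul_star_self _)

theorem brehmerDefect_insert (hcomm : ∀ i j, Commute (S i) (S j)) {G : Finset (Fin m)}
    {i : Fin m} (hi : i ∉ G) :
    brehmerDefect S (insert i G) = brehmerDefect S G - S i * brehmerDefect S G * adjoint (S i) := by
  classical
  rw [brehmerDefect, Finset.sum_powerset_insert hi, sub_eq_add_neg, brehmerDefect,
    Finset.mul_sum, Finset.sum_mul, ← Finset.sum_neg_distrib]
  refine congrArg _ (Finset.sum_congr rfl fun F hF => ?_)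
  have hiF : i ∉ F := fun h => hi (Finset.mem_powerset.1 hF h)
  rw [subProd_insert hcomm hiF, Finset.card_insert_of_notMem hiF, ← star_eq_adjoint,
    ← star_eq_adjoint, star_mul, pow_succ]
  simp [mul_assoc, star_eq_adjoint]

end BrehmerDefect

theorem brehmer_of_pure_szego_general {H : Type*} [NormedAddCommGroup H]
    [InnerProductSpace ℂ H] [CompleteSpace H] {n : ℕ} (T : Fin n → (H →L[ℂ] H))
    (hcomm : ∀ i j, Commute (T i) (T j))
    (hpure : ∀ (i : Fin n) (h : H),
      Tendsto (fun m : ℕ => ((adjoint (T i)) ^ m) h) atTop (𝓝 0))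
    (hszego : (brehmerDefect T Finset.univ).IsPositive) :
    ∀ G : Finset (Fin n), (brehmerDefect T G).IsPositive := by
  suffices ∀ s : Finset (Fin n), (brehmerDefect T sᶜ).IsPositive from
    fun G => by simpa using this Gᶜ
  intro s
  induction s using Finset.induction_on with
  | empty => simpa using hszego
  | insert i s hi ih =>
    have hiG : i ∉ (insert i s)ᶜ := by simp
    rw [← Finset.insert_compl_insert hi, brehmerDefect_insert hcomm hiG] at ih
    exact isPositive_of_isPositive_sub_conj_adjoint (isSelfAdjoint_brehmerDefect _) (hpure i) ih

/-- A pure commuting tuple of contractions satisfying Szegő positivity satisfies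
Brehmer positivity. -/
theorem brehmer_of_pure_szego {H : Type*} [NormedAddCommGroup H]
    [InnerProductSpace ℂ H] [CompleteSpace H] {n : ℕ} (T : Fin n → (H →L[ℂ] H))
    (hcomm : ∀ i j, Commute (T i) (T j)) (hcontr : ∀ i, ‖T i‖ ≤ 1)
    (hpure : ∀ (i : Fin n) (h : H),
      Tendsto (fun m : ℕ => ((adjoint (T i)) ^ m) h) atTop (𝓝 0))
    (hszego : (brehmerDefect T Finset.univ).IsPositive) :
    ∀ G : Finset (Fin n), (brehmerDefect T G).IsPositive :=
  brehmer_of_pure_szego_general T hcomm hpure hszego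
end

section
/- Let T = (T_1,…,T_n) be a commuting tuple of contractions on H and let G ⊆ {1,…,n−1} with 1 ∈ G. Then for the (n−1)-tuple T̂_{1n} = (T_1T_n, T_2,…,T_{n−1}) and the subtuples T̂_1 = (T_2,…,T_n) and T̂_n = (T_1,…,T_{n−1}), the defect operator identity ∑_{F⊆G}(−1)^{|F|}(T̂_{1n})_F(T̂_{1n})_F* = ∑_{F⊆G}(−1)^{|F|}(T̂_1)_F(T̂_1)_F* + T_n (∑_{F⊆G}(−1)^{|F|}(T̂_n)_F(T̂_n)_F*) T_n* holds, where in each sum the index 1 of F refers to the first entry of the respective tuple. -/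
open ContinuousLinearMap

lemma subProd_congr {H : Type*} [NormedAddCommGroup H] [InnerProductSpace ℂ H]
    {m : ℕ} {S S' : Fin m → (H →L[ℂ] H)} {F : Finset (Fin m)}
    (h : ∀ i ∈ F, S i = S' i) : subProd S F = subProd S' F := by
  unfold subProd
  congr 1
  apply List.map_congr_left
  intro i hi
  exact h i (by simpa using hi)

lemma subProd_insert_zero {H : Type*} [NormedAddCommGroup H] [InnerProductSpace ℂ H]
    {m : ℕ} (S : Fin (m + 1) → (H →L[ℂ] H)) {F : Finset (Fin (m + 1))} (h : 0 ∉ F) :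
    subProd S (insert 0 F) = S 0 * subProd S F := by
  unfold subProd
  rw [Finset.sort_insert _ (fun b _ => Fin.zero_le b) h, List.map_cons, List.prod_cons]

/-- Key abstract identity: only commutation is needed. -/
lemma brehmer_key {H : Type*} [NormedAddCommGroup H] [InnerProductSpace ℂ H]
    [CompleteSpace H] {m : ℕ} (S : Fin (m + 1) → (H →L[ℂ] H)) (A : H →L[ℂ] H)
    (hA : ∀ i, Commute A (S i)) (G : Finset (Fin (m + 1))) (hG : (0 : Fin (m + 1)) ∈ G) :
    brehmerDefect (Function.update S 0 (S 0 * A)) G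
      = brehmerDefect (Function.update S 0 A) G + A * brehmerDefect S G * adjoint A := by
  classical
  have hG' : G = insert 0 (G.erase 0) := (Finset.insert_erase hG).symm
  have h0 : (0 : Fin (m + 1)) ∉ G.erase 0 := Finset.notMem_erase _ _
  rw [hG']
  unfold brehmerDefect
  rw [Finset.sum_powerset_insert h0, Finset.sum_powerset_insert h0,
    Finset.sum_powerset_insert h0]
  have key : ∀ F ∈ (G.erase 0).powerset, (0 : Fin (m + 1)) ∉ F := by
    intro F hF
    exact fun h => h0 (Finset.mem_powerset.mp hF h)
  have hup : ∀ (X : H →L[ℂ] H) (F : Finset (Fin (m + 1))), (0 : Fin (m + 1)) ∉ F →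
      subProd (Function.update S 0 X) F = subProd S F := by
    intro X F h0F
    apply subProd_congr
    intro i hi
    exact Function.update_of_ne (by rintro rfl; exact h0F hi) _ _
  have hins : ∀ (X : H →L[ℂ] H) (F : Finset (Fin (m + 1))), (0 : Fin (m + 1)) ∉ F →
      subProd (Function.update S 0 X) (insert 0 F) = X * subProd S F := by
    intro X F h0F
    rw [subProd_insert_zero _ (by simpa using h0F), Function.update_self, hup X F h0F]
  rw [mul_add, add_mul, Finset.mul_sum, Finset.mul_sum, Finset.sum_mul, Finset.sum_mul,
    ← Finset.sum_add_distrib, add_add_add_comm, ← Finset.sum_add_distrib,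
    ← Finset.sum_add_distrib, ← Finset.sum_add_distrib]
  apply Finset.sum_congr rfl
  intro F hF
  have h0F := key F hF
  rw [hup _ F h0F, hup _ F h0F, hins _ F h0F, hins _ F h0F]
  set P := subProd S F with hP
  have hcard : (insert (0 : Fin (m + 1)) F).card = F.card + 1 :=
    Finset.card_insert_of_notMem h0F
  rw [subProd_insert_zero S h0F, hcard]
  have hadj : ∀ X Y : H →L[ℂ] H, adjoint (X * Y) = adjoint Y * adjoint X := fun X Y =>
    adjoint_comp X Y
  have hc : A * S 0 = S 0 * A := (hA 0).eq
  have hc' : adjoint A * adjoint (S 0) = adjoint (S 0) * adjoint A := by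
    rw [← hadj, ← hadj, hc]
  have e2 : A * P * adjoint (A * P) = A * (P * adjoint P) * adjoint A := by
    rw [hadj]; simp only [mul_assoc]
  have e3 : S 0 * A * P * adjoint (S 0 * A * P)
      = A * (S 0 * P * adjoint (S 0 * P)) * adjoint A := by
    simp only [hadj]
    simp only [mul_assoc]
    rw [← mul_assoc A (S 0), hc, ← hc']
    simp only [mul_assoc]
  rw [e2, e3]
  simp only [pow_succ, mul_neg_one, neg_smul, mul_neg, neg_mul, mul_smul_comm, smul_mul_assoc]
  module

/-- The defect identity for the merged tuple `T̂_{1n} = (T_1 T_n, T_2, …, T_{n−1})`: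
for `G ⊆ {1,…,n−1}` with `1 ∈ G` (here `0`-indexed, tuples of length `n + 3`),
`∑_{F⊆G}(−1)^{|F|}(T̂_{1n})_F(T̂_{1n})_F* = ∑_{F⊆G}(−1)^{|F|}(T̂_1)_F(T̂_1)_F*
  + T_n (∑_{F⊆G}(−1)^{|F|}(T̂_n)_F(T̂_n)_F*) T_n*`,
where in each sum the first slot of the respective tuple is used, i.e. the first slot of
`T̂_1` carries `T_n` and the first slot of `T̂_n` carries `T_1`. -/
theorem merged_tuple_defect_identity {H : Type*} [NormedAddCommGroup H]
    [InnerProductSpace ℂ H] [CompleteSpace H] {n : ℕ} (T : Fin (n + 3) → (H →L[ℂ] H))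
    (hcomm : ∀ i j, Commute (T i) (T j)) (hcontr : ∀ i, ‖T i‖ ≤ 1)
    (G : Finset (Fin (n + 2))) (hG : (0 : Fin (n + 2)) ∈ G) :
    brehmerDefect
        (Function.update (fun i : Fin (n + 2) => T i.castSucc) 0
          (T 0 * T (Fin.last (n + 2)))) G
      = brehmerDefect
          (Function.update (fun i : Fin (n + 2) => T i.castSucc) 0
            (T (Fin.last (n + 2)))) G
        + T (Fin.last (n + 2)) * brehmerDefect (fun i : Fin (n + 2) => T i.castSucc) G *
            adjoint (T (Fin.last (n + 2))) := by
  have h := brehmer_key (fun i : Fin (n + 2) => T i.castSucc) (T (Fin.last (n + 2)))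
    (fun i => hcomm _ _) G hG
  simpa [Fin.castSucc_zero] using h
end

section
/- Let T be a contraction on H and let Q be the positive operator with Q² = SOT-lim_{m→∞} T^m T^{*m}. Then T Q² T* ≤ Q², and consequently there exists a contraction T̃ on the closure of the range of Q satisfying T̃* Q h = Q T* h for all h ∈ H; moreover T̃ is a co-isometry, i.e. T Q² T* = Q². -/
/-!
Passing to the limit in `T^(m+1) T*^(m+1) = T (T^m T*^m) T*` gives `T Q² T* = Q²`, that is
`‖Q T* h‖ = ‖Q h‖` for all `h`. So `Q h ↦ Q T* h` is a well-defined isometry of `ran Q`, which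
extends by continuity to an isometry `S` of its closure, and `T̃ := S*` is a co-isometry with
`T̃* Q = Q T*`.
-/

open ContinuousLinearMap Filter Topology

noncomputable instance {H : Type*} [NormedAddCommGroup H] [InnerProductSpace ℂ H]
    [CompleteSpace H] (K : Submodule ℂ H) : CompleteSpace K.topologicalClosure :=
  K.isClosed_topologicalClosure.completeSpace_coe

theorem mul_mul_eq_of_tendsto_pow_mul_pow {R M : Type*} [Semiring R] [TopologicalSpace M]
    [AddCommMonoid M] [Module R M] [T2Space M] {A B P : M →L[R] M}
    (h : ∀ x, Tendsto (fun m : ℕ => (A ^ m * B ^ m) x) atTop (𝓝 (P x))) :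
    A * P * B = P := by
  ext x
  have hshift : Tendsto (fun m : ℕ => (A ^ (m + 1) * B ^ (m + 1)) x) atTop (𝓝 (P x)) :=
    (h x).comp (tendsto_add_atTop_nat 1)
  have hconj : Tendsto (fun m : ℕ => A ((A ^ m * B ^ m) (B x))) atTop (𝓝 (A (P (B x)))) :=
    (A.continuous.tendsto _).comp (h (B x))
  refine tendsto_nhds_unique (hconj.congr fun m => ?_) hshift
  rw [pow_succ' A, pow_succ B]
  rfl

theorem norm_apply_eq_of_adjoint_comp_self_eq {𝕜 E F G : Type*} [RCLike 𝕜]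
    [NormedAddCommGroup E] [InnerProductSpace 𝕜 E] [CompleteSpace E]
    [NormedAddCommGroup F] [InnerProductSpace 𝕜 F] [CompleteSpace F]
    [NormedAddCommGroup G] [InnerProductSpace 𝕜 G] [CompleteSpace G]
    {A : E →L[𝕜] F} {B : E →L[𝕜] G} (h : adjoint A ∘L A = adjoint B ∘L B) (x : E) :
    ‖A x‖ = ‖B x‖ := by
  rw [apply_norm_eq_sqrt_inner_adjoint_left, apply_norm_eq_sqrt_inner_adjoint_left, h]

theorem LinearMap.exists_linearIsometry_closure_range_of_norm_eq {𝕜 E F : Type*}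
    [NontriviallyNormedField 𝕜] [AddCommGroup E] [Module 𝕜 E]
    [NormedAddCommGroup F] [NormedSpace 𝕜 F] (A B : E →ₗ[𝕜] F)
    [CompleteSpace (LinearMap.range B).topologicalClosure]
    (hnorm : ∀ x, ‖A x‖ = ‖B x‖) (hmem : ∀ x, A x ∈ (LinearMap.range B).topologicalClosure) :
    ∃ S : (LinearMap.range B).topologicalClosure →ₗᵢ[𝕜] (LinearMap.range B).topologicalClosure,
      ∀ x, S ⟨B x, Submodule.le_topologicalClosure _ (LinearMap.mem_range_self B x)⟩ =
        ⟨A x, hmem x⟩ := by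
  set K := (LinearMap.range B).topologicalClosure
  let A' : E →ₗ[𝕜] K := A.codRestrict K hmem
  let B' : E →ₗ[𝕜] K :=
    B.codRestrict K fun x => Submodule.le_topologicalClosure _ (LinearMap.mem_range_self B x)
  have hdense : DenseRange B' := by
    rw [DenseRange, Subtype.dense_iff, ← Set.range_comp]
    exact (Submodule.topologicalClosure_coe _).subset
  have hext := LinearMap.extendOfNorm_eq (f := A') hdense
    ⟨1, fun x => (one_mul ‖B' x‖).symm ▸ (hnorm x).le⟩
  refine ⟨⟨(A'.extendOfNorm B' : K →ₗ[𝕜] K), fun y => ?_⟩, hext⟩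
  refine hdense.induction (fun y ⟨x, hx⟩ => ?_) (isClosed_eq (by fun_prop) (by fun_prop)) y
  subst hx
  exact (congrArg norm (hext x)).trans (hnorm x)

theorem contraction_limit_coisometry_general {H : Type*} [NormedAddCommGroup H]
    [InnerProductSpace ℂ H] [CompleteSpace H] (T Q : H →L[ℂ] H)
    (hQ : Q.IsPositive)
    (hlim : ∀ h : H,
      Tendsto (fun m : ℕ => (T ^ m * (adjoint T) ^ m) h) atTop (𝓝 ((Q ^ 2) h))) :
    (Q ^ 2 - T * Q ^ 2 * adjoint T).IsPositive ∧
    (∃ Tt : (LinearMap.range (Q : H →ₗ[ℂ] H)).topologicalClosure →L[ℂ]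
        (LinearMap.range (Q : H →ₗ[ℂ] H)).topologicalClosure,
      ‖Tt‖ ≤ 1 ∧
      (∀ h : H,
        adjoint Tt ⟨Q h, Submodule.le_topologicalClosure _
            (LinearMap.mem_range_self (Q : H →ₗ[ℂ] H) h)⟩
          = ⟨Q (adjoint T h), Submodule.le_topologicalClosure _
              (LinearMap.mem_range_self (Q : H →ₗ[ℂ] H) (adjoint T h))⟩) ∧
      Tt ∘L adjoint Tt = 1) ∧
    T * Q ^ 2 * adjoint T = Q ^ 2 := by
  have hfix : T * Q ^ 2 * adjoint T = Q ^ 2 := mul_mul_eq_of_tendsto_pow_mul_pow hlim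
  have hnorm : ∀ h, ‖(Q ∘L adjoint T) h‖ = ‖Q h‖ := by
    refine norm_apply_eq_of_adjoint_comp_self_eq ?_
    rw [adjoint_comp, adjoint_adjoint, hQ.isSelfAdjoint.adjoint_eq]
    simpa only [pow_two, mul_def, comp_assoc] using hfix
  obtain ⟨S, hS⟩ := LinearMap.exists_linearIsometry_closure_range_of_norm_eq
    (Q ∘L adjoint T : H →ₗ[ℂ] H) Q hnorm
    fun h => Submodule.le_topologicalClosure _ (LinearMap.mem_range_self _ (adjoint T h))
  refine ⟨by rw [hfix, sub_self]; exact isPositive_zero,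
    ⟨adjoint S.toContinuousLinearMap, ?_, fun h => ?_, ?_⟩, hfix⟩
  · rw [LinearIsometryEquiv.norm_map]
    exact S.norm_toContinuousLinearMap_le
  · rw [adjoint_adjoint]
    exact hS h
  · rw [adjoint_adjoint]
    exact S.adjoint_comp_self

/-- Let `T` be a contraction and `Q ≥ 0` with `Q² = SOT-lim T^m T*^m`. Then
`T Q² T* ≤ Q²`; there is a contraction `T̃` on the closure of `ran Q` with
`T̃* (Q h) = Q (T* h)`, and `T̃` is a co-isometry, i.e. `T Q² T* = Q²`. -/
theorem contraction_limit_coisometry {H : Type*} [NormedAddCommGroup H]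
    [InnerProductSpace ℂ H] [CompleteSpace H] (T Q : H →L[ℂ] H)
    (hT : ‖T‖ ≤ 1) (hQ : Q.IsPositive)
    (hlim : ∀ h : H,
      Tendsto (fun m : ℕ => (T ^ m * (adjoint T) ^ m) h) atTop (𝓝 ((Q ^ 2) h))) :
    (Q ^ 2 - T * Q ^ 2 * adjoint T).IsPositive ∧
    (∃ Tt : (LinearMap.range (Q : H →ₗ[ℂ] H)).topologicalClosure →L[ℂ]
        (LinearMap.range (Q : H →ₗ[ℂ] H)).topologicalClosure,
      ‖Tt‖ ≤ 1 ∧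
      (∀ h : H,
        adjoint Tt ⟨Q h, Submodule.le_topologicalClosure _
            (LinearMap.mem_range_self (Q : H →ₗ[ℂ] H) h)⟩
          = ⟨Q (adjoint T h), Submodule.le_topologicalClosure _
              (LinearMap.mem_range_self (Q : H →ₗ[ℂ] H) (adjoint T h))⟩) ∧
      Tt ∘L adjoint Tt = 1) ∧
    T * Q ^ 2 * adjoint T = Q ^ 2 :=
  contraction_limit_coisometry_general T Q hQ hlim
end

section
/- Let T = (T_1,…,T_n) be a commuting tuple of contractions on H, G ⊆ {1,…,n} and Ḡ its complement. Define Q ≥ 0 by Q² = SOT-lim_{m→∞} T_Ḡ^m T_Ḡ^{*m} where T_Ḡ is the product of T_j for j ∈ Ḡ. Then for each j = 1,…,n there is a contraction T̃_j on the closure of ran Q with T̃_j* Q h = Q T_j* h for all h, and T̃_j is a co-isometry for every j ∈ Ḡ. -/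
/-!
Write `S = T_Ḡ` and `q h = ‖Q h‖`. Since `‖S*^m h‖² = ⟪S^m S*^m h, h⟫ → ‖Q h‖²`, `q` is the
asymptotic norm `lim ‖S*^m h‖`. Every `T_j*` is a contraction commuting with `S*`, so
`q (T_j* h) ≤ q h`; shifting the limit gives `q (S* h) = q h`, and for `j ∈ Ḡ` the factorisation
`S* = P* T_j*` with `P*` also `q`-decreasing forces `q (T_j* h) = q h`. Hence `Q h ↦ Q T_j* h`
extends to a contraction `B_j` of `closure (ran Q)`, isometric for `j ∈ Ḡ`, and `T̃_j = B_j*`.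
-/

open ContinuousLinearMap Filter Topology

namespace LinearMap

variable {𝕜 E F : Type*} [NontriviallyNormedField 𝕜] [AddCommGroup E] [Module 𝕜 E]
  [NormedAddCommGroup F] [NormedSpace 𝕜 F]

abbrev rangeClosure (Q : E →ₗ[𝕜] F) : Submodule 𝕜 F :=
  (LinearMap.range Q).topologicalClosure

instance [CompleteSpace F] (Q : E →ₗ[𝕜] F) : CompleteSpace Q.rangeClosure :=
  (LinearMap.range Q).isClosed_topologicalClosure.completeSpace_coe

def rangeClosureRestrict (Q : E →ₗ[𝕜] F) : E →ₗ[𝕜] Q.rangeClosure :=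
  Q.codRestrict _ fun x => Submodule.le_topologicalClosure _ (mem_range_self Q x)

theorem denseRange_rangeClosureRestrict (Q : E →ₗ[𝕜] F) : DenseRange Q.rangeClosureRestrict := by
  refine Subtype.dense_iff.2 ?_
  rw [← Set.range_comp]
  exact (Submodule.topologicalClosure_coe _).le

variable [CompleteSpace F]

/-- The operator `Q x ↦ Q (A x)` on `closure (range Q)`; it is junk (zero) unless
`‖Q (A x)‖ ≤ C * ‖Q x‖` for some `C`. -/
noncomputable def intertwiner (Q : E →ₗ[𝕜] F) (A : E →ₗ[𝕜] E) :
    Q.rangeClosure →L[𝕜] Q.rangeClosure :=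
  (Q.rangeClosureRestrict ∘ₗ A).extendOfNorm Q.rangeClosureRestrict

variable {Q : E →ₗ[𝕜] F} {A : E →ₗ[𝕜] E}

theorem intertwiner_apply (hA : ∃ C, ∀ x, ‖Q (A x)‖ ≤ C * ‖Q x‖) (x : E) :
    Q.intertwiner A (Q.rangeClosureRestrict x) = Q.rangeClosureRestrict (A x) :=
  extendOfNorm_eq Q.denseRange_rangeClosureRestrict hA x

theorem norm_intertwiner_le {C : ℝ} (hC : 0 ≤ C) (hA : ∀ x, ‖Q (A x)‖ ≤ C * ‖Q x‖) :
    ‖Q.intertwiner A‖ ≤ C :=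
  opNorm_extendOfNorm_le Q.denseRange_rangeClosureRestrict hC hA

theorem norm_intertwiner_apply (hA : ∀ x, ‖Q (A x)‖ = ‖Q x‖) (y : Q.rangeClosure) :
    ‖Q.intertwiner A y‖ = ‖y‖ := by
  refine Q.denseRange_rangeClosureRestrict.induction ?_
    (isClosed_eq (by fun_prop) continuous_norm) y
  rintro _ ⟨x, rfl⟩
  rw [intertwiner_apply ⟨1, fun x => (one_mul ‖Q x‖).symm ▸ (hA x).le⟩]
  exact hA x

end LinearMap

namespace ContinuousLinearMap

section Asymptotic

variable {𝕜 E : Type*} [NontriviallyNormedField 𝕜] [NormedAddCommGroup E] [NormedSpace 𝕜 E]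
  {R : E →L[𝕜] E} {q : E → ℝ}

theorem le_of_tendsto_norm_pow_apply (hq : ∀ x, Tendsto (fun m : ℕ => ‖(R ^ m) x‖) atTop (𝓝 (q x)))
    {C : E →L[𝕜] E} (hCR : Commute C R) (hC : ‖C‖ ≤ 1) (x : E) : q (C x) ≤ q x := by
  refine le_of_tendsto_of_tendsto' (hq (C x)) (hq x) fun m => ?_
  calc ‖(R ^ m) (C x)‖ = ‖C ((R ^ m) x)‖ :=
        congrArg norm (DFunLike.congr_fun (hCR.pow_right m).eq x).symm
    _ ≤ ‖(R ^ m) x‖ := C.le_of_opNorm_le hC _ |>.trans_eq (one_mul _)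

theorem eq_of_tendsto_norm_pow_apply (hq : ∀ x, Tendsto (fun m : ℕ => ‖(R ^ m) x‖) atTop (𝓝 (q x)))
    (x : E) : q (R x) = q x := by
  refine tendsto_nhds_unique (hq (R x)) ?_
  simpa only [Function.comp_def, pow_succ, mul_apply_eq_comp] using
    (hq x).comp (tendsto_add_atTop_nat 1)

end Asymptotic

section Hilbert

variable {𝕜 E : Type*} [RCLike 𝕜] [NormedAddCommGroup E] [InnerProductSpace 𝕜 E] [CompleteSpace E]

theorem tendsto_norm_adjoint_pow_apply {Q S : E →L[𝕜] E} (hQ : IsSelfAdjoint Q) {x : E}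
    (h : Tendsto (fun m : ℕ => (S ^ m * adjoint S ^ m) x) atTop (𝓝 ((Q ^ 2) x))) :
    Tendsto (fun m : ℕ => ‖(adjoint S ^ m) x‖) atTop (𝓝 ‖Q x‖) := by
  have hnorm_sq (A : E →L[𝕜] E) : ‖A x‖ ^ 2 = RCLike.re (inner 𝕜 ((adjoint A * A) x) x) :=
    apply_norm_sq_eq_inner_adjoint_left A x
  have hsq : Tendsto (fun m : ℕ => ‖(adjoint S ^ m) x‖ ^ 2) atTop (𝓝 (‖Q x‖ ^ 2)) := by
    simp only [hnorm_sq, ← star_eq_adjoint, star_pow, star_star, hQ.star_eq, ← sq]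
    exact (RCLike.continuous_re.tendsto _).comp (h.inner tendsto_const_nhds)
  simpa only [Real.sqrt_sq (norm_nonneg _)] using hsq.sqrt

/-- For `q = ‖Q ·‖` with `Q` self-adjoint, `C ∈ adjointContractions q` says `C Q² C† ≤ Q²`. -/
def adjointContractions (q : E → ℝ) : Submonoid (E →L[𝕜] E) where
  carrier := {C | ∀ x, q (adjoint C x) ≤ q x}
  mul_mem' {C D} hC hD x := by
    simpa only [← star_eq_adjoint, star_mul, mul_apply_eq_comp] using (hD _).trans (hC x)
  one_mem' x := by simp [← star_eq_adjoint]

theorem mem_adjointContractions_of_commute {S C : E →L[𝕜] E} {q : E → ℝ}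
    (hq : ∀ x, Tendsto (fun m : ℕ => ‖(adjoint S ^ m) x‖) atTop (𝓝 (q x)))
    (hCS : Commute C S) (hC : ‖C‖ ≤ 1) : C ∈ adjointContractions q :=
  le_of_tendsto_norm_pow_apply hq (by simpa only [star_eq_adjoint] using hCS.star_star)
    (by rwa [← star_eq_adjoint, norm_star])

end Hilbert

end ContinuousLinearMap

section CommutingTuple

variable {H : Type*} [NormedAddCommGroup H] [InnerProductSpace ℂ H] {n : ℕ}
  {T : Fin n → (H →L[ℂ] H)}

theorem commute_subProd {i : Fin n} (hi : ∀ k, Commute (T i) (T k)) (F : Finset (Fin n)) :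
    Commute (T i) (subProd T F) :=
  Commute.list_prod_right _ _ fun _ hx => by
    obtain ⟨k, -, rfl⟩ := List.mem_map.1 hx
    exact hi k

theorem exists_subProd_eq_mul (hcomm : ∀ i j, Commute (T i) (T j)) {F : Finset (Fin n)}
    {j : Fin n} (hj : j ∈ F) : ∃ l : List (Fin n), subProd T F = T j * (l.map T).prod := by
  refine ⟨(F.sort (· ≤ ·)).erase j, ?_⟩
  have hperm := (List.perm_cons_erase ((Finset.mem_sort (· ≤ ·)).2 hj)).map T
  simpa [subProd] using hperm.prod_eq' (List.pairwise_map.2 (List.pairwise_of_forall hcomm))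

variable [CompleteSpace H]

theorem apply_adjoint_eq_of_mem (hcomm : ∀ i j, Commute (T i) (T j)) {F : Finset (Fin n)}
    {q : H → ℝ} (hq : ∀ h, Tendsto (fun m : ℕ => ‖(adjoint (subProd T F) ^ m) h‖) atTop (𝓝 (q h)))
    (hT : ∀ i, T i ∈ adjointContractions q) {j : Fin n} (hj : j ∈ F) (h : H) :
    q (adjoint (T j) h) = q h := by
  obtain ⟨l, hl⟩ := exists_subProd_eq_mul hcomm hj
  have hl_mem : (l.map T).prod ∈ adjointContractions q :=
    list_prod_mem (by simpa using fun i _ => hT i)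
  refine le_antisymm (hT j h) ?_
  calc q h = q (adjoint (subProd T F) h) := (eq_of_tendsto_norm_pow_apply hq h).symm
    _ = q (adjoint (l.map T).prod (adjoint (T j) h)) := by
      rw [hl, ← star_eq_adjoint, star_mul]; rfl
    _ ≤ q (adjoint (T j) h) := hl_mem _

end CommutingTuple

/-- Let `T = (T_1,…,T_n)` be commuting contractions, `G ⊆ {1,…,n}` with complement `Ḡ`,
and `Q ≥ 0` with `Q² = SOT-lim T_Ḡ^m T_Ḡ^{*m}`. Then for each `j` there is a contraction
`T̃_j` on the closure of `ran Q` with `T̃_j* (Q h) = Q (T_j* h)`, and `T̃_j` is a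
co-isometry for every `j ∈ Ḡ`. -/
theorem tuple_limit_coisometries {H : Type*} [NormedAddCommGroup H]
    [InnerProductSpace ℂ H] [CompleteSpace H] {n : ℕ} (T : Fin n → (H →L[ℂ] H))
    (hcomm : ∀ i j, Commute (T i) (T j)) (hcontr : ∀ i, ‖T i‖ ≤ 1)
    (G : Finset (Fin n)) (Q : H →L[ℂ] H) (hQ : Q.IsPositive)
    (hlim : ∀ h : H,
      Tendsto (fun m : ℕ => (subProd T Gᶜ ^ m * (adjoint (subProd T Gᶜ)) ^ m) h)
        atTop (𝓝 ((Q ^ 2) h))) :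
    ∃ Tt : Fin n → ((LinearMap.range (Q : H →ₗ[ℂ] H)).topologicalClosure →L[ℂ]
        (LinearMap.range (Q : H →ₗ[ℂ] H)).topologicalClosure),
      (∀ j, ‖Tt j‖ ≤ 1) ∧
      (∀ (j : Fin n) (h : H),
        adjoint (Tt j) ⟨Q h, Submodule.le_topologicalClosure _
            (LinearMap.mem_range_self (Q : H →ₗ[ℂ] H) h)⟩
          = ⟨Q (adjoint (T j) h), Submodule.le_topologicalClosure _
              (LinearMap.mem_range_self (Q : H →ₗ[ℂ] H) (adjoint (T j) h))⟩) ∧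
      (∀ j ∈ Gᶜ, Tt j ∘L adjoint (Tt j) = 1) := by
  have hq (h : H) : Tendsto (fun m : ℕ => ‖(adjoint (subProd T Gᶜ) ^ m) h‖) atTop (𝓝 ‖Q h‖) :=
    tendsto_norm_adjoint_pow_apply hQ.isSelfAdjoint (hlim h)
  have hT (j : Fin n) : T j ∈ adjointContractions fun h => ‖Q h‖ :=
    mem_adjointContractions_of_commute hq (commute_subProd (hcomm j) _) (hcontr j)
  have hbound (j : Fin n) (h : H) : ‖Q (adjoint (T j) h)‖ ≤ 1 * ‖Q h‖ := by
    simpa using hT j h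
  refine ⟨fun j => adjoint ((Q : H →ₗ[ℂ] H).intertwiner (adjoint (T j))), fun j => ?_,
    fun j h => ?_, fun j hj => ?_⟩
  · rw [LinearIsometryEquiv.norm_map]
    exact LinearMap.norm_intertwiner_le zero_le_one (hbound j)
  · rw [adjoint_adjoint]
    exact LinearMap.intertwiner_apply ⟨1, hbound j⟩ h
  · rw [adjoint_adjoint, ← norm_map_iff_adjoint_comp_self]
    exact LinearMap.norm_intertwiner_apply (apply_adjoint_eq_of_mem hcomm hq hT hj)
end
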